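/- arXiv:2410.16075 — 2 statements merged into one kernel-verified Lean document; each statement's English description precedes it below -/
import Mathlib

section
/- On the Eguchi–Hanson space, the three infinitesimal Ricci-flat deformations o_1 = −r²(1+r⁴)^{−3/2}(dr² + r²α_1²) + (1+r⁴)^{−1/2}(α_2² + α_3²), o_2 = (1+r⁴)^{−1}(r dr·α_2 − r² α_1·α_3), o_3 = (1+r⁴)^{−1}(r dr·α_3 + r² α_1·α_2) all have pointwise norm |o_i|_{eh} = 2/(1+r⁴) with respect to the Eguchi–Hanson metric. -/
/-!  STATEMENT 1: the three infinitesimal Ricci-flat deformations `o₁, o₂, o₃` of the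
Eguchi–Hanson metric all have pointwise norm `2/(1+r⁴)`.

Everything is expressed at a point with radial coordinate `r > 0`, in the coordinate
coframe `(dr, α₁, α₂, α₃)`, where `(α₁, α₂, α₃)` is the standard coframe of
left-invariant `1`-forms on `S³`.  A symmetric 2-tensor is recorded by its (symmetric)
matrix of components in this coframe, with the convention `a·b = a ⊗ b + b ⊗ a` and
`a² = a ⊗ a` for the symmetric products appearing in the formulas of the paper.
The squared pointwise norm of a 2-tensor `h` with respect to a metric `g` is
`|h|²_g = g^{ik} g^{jl} h_{ij} h_{kl} = tr (g⁻¹ h g⁻¹ h)`. -/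

noncomputable section

/-- The Eguchi–Hanson metric
`eh = √(r⁴/(1+r⁴)) (dr² + r² α₁²) + √(1+r⁴) (α₂² + α₃²)`
in the coframe `(dr, α₁, α₂, α₃)`. -/
def ehMetric (r : ℝ) : Matrix (Fin 4) (Fin 4) ℝ :=
  Matrix.diagonal
    ![Real.sqrt (r ^ 4 / (1 + r ^ 4)), Real.sqrt (r ^ 4 / (1 + r ^ 4)) * r ^ 2,
      Real.sqrt (1 + r ^ 4), Real.sqrt (1 + r ^ 4)]

/-- `o₁ = −r²(1+r⁴)^{−3/2}(dr² + r²α₁²) + (1+r⁴)^{−1/2}(α₂² + α₃²)`. -/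
def ehO1 (r : ℝ) : Matrix (Fin 4) (Fin 4) ℝ :=
  Matrix.diagonal
    ![-(r ^ 2 * (1 + r ^ 4) ^ (-(3 : ℝ) / 2)),
      -(r ^ 2 * (1 + r ^ 4) ^ (-(3 : ℝ) / 2)) * r ^ 2,
      (1 + r ^ 4) ^ (-(1 : ℝ) / 2), (1 + r ^ 4) ^ (-(1 : ℝ) / 2)]

/-- `o₂ = (1+r⁴)^{−1} (r dr·α₂ − r² α₁·α₃)`. -/
def ehO2 (r : ℝ) : Matrix (Fin 4) (Fin 4) ℝ :=
  Matrix.of fun i j =>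
    if (i = 0 ∧ j = 2) ∨ (i = 2 ∧ j = 0) then r / (1 + r ^ 4)
    else if (i = 1 ∧ j = 3) ∨ (i = 3 ∧ j = 1) then -(r ^ 2 / (1 + r ^ 4))
    else 0

/-- `o₃ = (1+r⁴)^{−1} (r dr·α₃ + r² α₁·α₂)`. -/
def ehO3 (r : ℝ) : Matrix (Fin 4) (Fin 4) ℝ :=
  Matrix.of fun i j =>
    if (i = 0 ∧ j = 3) ∨ (i = 3 ∧ j = 0) then r / (1 + r ^ 4)
    else if (i = 1 ∧ j = 2) ∨ (i = 2 ∧ j = 1) then r ^ 2 / (1 + r ^ 4)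
    else 0

/-- Squared pointwise norm `|h|²_g = g^{ik} g^{jl} h_{ij} h_{kl} = tr(g⁻¹ h g⁻¹ h)`. -/
def tensorNormSq (g h : Matrix (Fin 4) (Fin 4) ℝ) : ℝ :=
  Matrix.trace (g⁻¹ * h * g⁻¹ * h)

private lemma ehKey (v : Fin 4 → ℝ) (hv : ∀ i, v i ≠ 0) (h : Matrix (Fin 4) (Fin 4) ℝ) :
    tensorNormSq (Matrix.diagonal v) h
      = ∑ i, ∑ j, (v i)⁻¹ * h i j * ((v j)⁻¹ * h j i) := by
  have hinv : (Matrix.diagonal v)⁻¹ = Matrix.diagonal (fun i => (v i)⁻¹) := by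
    apply Matrix.inv_eq_right_inv
    rw [Matrix.diagonal_mul_diagonal]
    convert Matrix.diagonal_one with i
    exact mul_inv_cancel₀ (hv i)
  unfold tensorNormSq
  rw [hinv]
  simp [Matrix.trace, Matrix.diag, Matrix.mul_apply, Matrix.diagonal_apply,
    ite_mul, mul_ite, Finset.sum_ite_eq, Finset.sum_ite_eq',
    Finset.mul_sum, mul_assoc]

theorem eguchiHanson_deformations_pointwise_norm (r : ℝ) (hr : 0 < r) :
    Real.sqrt (tensorNormSq (ehMetric r) (ehO1 r)) = 2 / (1 + r ^ 4) ∧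
    Real.sqrt (tensorNormSq (ehMetric r) (ehO2 r)) = 2 / (1 + r ^ 4) ∧
    Real.sqrt (tensorNormSq (ehMetric r) (ehO3 r)) = 2 / (1 + r ^ 4) := by
  have hP : (0:ℝ) < 1 + r ^ 4 := by positivity
  have hs : Real.sqrt (r ^ 4 / (1 + r ^ 4)) = r ^ 2 / Real.sqrt (1 + r ^ 4) := by
    rw [Real.sqrt_div (by positivity), show r ^ 4 = (r ^ 2) ^ 2 by ring,
      Real.sqrt_sq (by positivity)]
  have ht : Real.sqrt (1 + r ^ 4) ^ 2 = 1 + r ^ 4 := Real.sq_sqrt hP.le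
  have htpos : 0 < Real.sqrt (1 + r ^ 4) := Real.sqrt_pos.2 hP
  have htne : Real.sqrt (1 + r ^ 4) ≠ 0 := ne_of_gt htpos
  have hrne : r ≠ 0 := ne_of_gt hr
  have e1 : (1 + r ^ 4) ^ (-(1:ℝ)/2) = (Real.sqrt (1 + r ^ 4))⁻¹ := by
    rw [Real.sqrt_eq_rpow, ← Real.rpow_neg hP.le]; norm_num
  have e3 : (1 + r ^ 4) ^ (-(3:ℝ)/2) = (Real.sqrt (1 + r ^ 4))⁻¹ * (1 + r ^ 4)⁻¹ := by
    rw [Real.sqrt_eq_rpow, ← Real.rpow_neg hP.le,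
      show (1 + r ^ 4)⁻¹ = (1 + r ^ 4) ^ (-1:ℝ) by rw [Real.rpow_neg_one],
      ← Real.rpow_add hP]; norm_num
  have hv : ∀ i, (![Real.sqrt (r ^ 4 / (1 + r ^ 4)), Real.sqrt (r ^ 4 / (1 + r ^ 4)) * r ^ 2,
      Real.sqrt (1 + r ^ 4), Real.sqrt (1 + r ^ 4)] : Fin 4 → ℝ) i ≠ 0 := by
    intro i
    fin_cases i <;> simp [hs, hrne, htne]
  have goalsq : Real.sqrt ((2 / (1 + r ^ 4)) ^ 2) = 2 / (1 + r ^ 4) :=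
    Real.sqrt_sq (by positivity)
  have key1 : tensorNormSq (ehMetric r) (ehO1 r) = (2 / (1 + r ^ 4)) ^ 2 := by
    rw [ehMetric, ehKey _ hv]
    simp only [Fin.sum_univ_four, ehO1, Matrix.diagonal_apply, Matrix.cons_val_zero,
      Matrix.cons_val_one, Matrix.head_cons, Matrix.cons_val_two, Matrix.tail_cons,
      Matrix.cons_val_three, Fin.reduceEq, ite_true, ite_false, if_true, if_false,
      mul_zero, zero_mul, add_zero, zero_add, mul_neg, neg_mul, neg_neg]
    rw [hs, e1, e3]
    have h2 : r ^ 2 ≠ 0 := pow_ne_zero 2 hrne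
    field_simp
    ring_nf
    rw [show Real.sqrt (1 + r ^ 4) ^ 4 = (Real.sqrt (1 + r ^ 4) ^ 2) ^ 2 by ring, ht]
    ring
  have key2 : tensorNormSq (ehMetric r) (ehO2 r) = (2 / (1 + r ^ 4)) ^ 2 := by
    rw [ehMetric, ehKey _ hv]
    simp only [Fin.sum_univ_four, ehO2, Matrix.of_apply, Matrix.cons_val_zero,
      Matrix.cons_val_one, Matrix.head_cons, Matrix.cons_val_two, Matrix.tail_cons,
      Matrix.cons_val_three, Fin.reduceEq, and_self, and_false, false_and, or_self,
      false_or, or_false, if_true, if_false, and_true, true_and, ite_true, ite_false,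
      mul_zero, zero_mul, add_zero, zero_add, mul_neg, neg_mul, neg_neg]
    rw [hs]
    field_simp
    ring_nf
  have key3 : tensorNormSq (ehMetric r) (ehO3 r) = (2 / (1 + r ^ 4)) ^ 2 := by
    rw [ehMetric, ehKey _ hv]
    simp only [Fin.sum_univ_four, ehO3, Matrix.of_apply, Matrix.cons_val_zero,
      Matrix.cons_val_one, Matrix.head_cons, Matrix.cons_val_two, Matrix.tail_cons,
      Matrix.cons_val_three, Fin.reduceEq, and_self, and_false, false_and, or_self,
      false_or, or_false, if_true, if_false, and_true, true_and, ite_true, ite_false,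
      mul_zero, zero_mul, add_zero, zero_add, mul_neg, neg_mul, neg_neg]
    rw [hs]
    field_simp
    ring_nf
  exact ⟨by rw [key1, goalsq], by rw [key2, goalsq], by rw [key3, goalsq]⟩

end
end

section
/- Let X, Y be Banach spaces of families of tensors over a time interval I, P_t a family of linear operators, V_t ⊂ W_t^⊥ finite-dimensional subspaces with L²-orthogonal complements W_t, and π_{V_t}, π_{W_t} the associated projections. Assume: (1) ‖(∂_t − P_t)h‖_Y ≤ C‖h‖_X; (2) for every ψ ∈ Y there is a unique u ∈ X with (∂_t − P_t)u = ψ, u_0 = 0, and ‖u‖_X ≤ C‖ψ‖_Y; (3) ‖π_{V_t}h‖_X ≤ C‖h‖_X and ‖π_{W_t}h‖_X ≤ C‖h‖_X; (4) if h_t ∈ V_t for all t then ‖π_{W_t}(∂_t − P_t)h‖_Y ≤ ε‖h‖_X. Then if ε is sufficiently small relative to C, for every ψ ∈ Y there exists h ∈ X with (∂_t − P_t)h_t − ψ_t ∈ V_t for all t, h_0 = 0, and h_t ∈ W_t for all t. -/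
/-!  STATEMENT 19: abstract Banach-space iteration producing heat flows modulo
obstructions.

Encoding: `X`, `Y` are the Banach spaces of families of tensors over the time interval,
`B = ∂ₜ − Pₜ`, `ev0` is evaluation at the initial time (so `ev0 h = 0` means `h₀ = 0`),
and `πVX, πWX` (resp. `πVY, πWY`) are the complementary projections of `X` (resp. `Y`)
onto the families with values in `Vₜ` resp. `Wₜ = Vₜ^⊥`, acting timewise, so that
"`hₜ ∈ Vₜ` for all `t`" reads `πWX h = 0`, "`hₜ ∈ Wₜ` for all `t`" reads `πVX h = 0`,
and "`(∂ₜ−Pₜ)hₜ − ψₜ ∈ Vₜ` for all `t`" reads `πWY (B h − ψ) = 0`.  Hypotheses (1)–(4)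
of the statement are `hB`, `hsolve`/`hsolve_bound`, `hprojX`/`hprojY`, and `heps`;
`hev0` records that the timewise projection preserves vanishing initial data, and the
smallness of `ε` relative to `C` is `C² ε < 1`. -/
theorem heat_flow_modulo_obstructions
    {X Y Z : Type*}
    [NormedAddCommGroup X] [NormedSpace ℝ X] [CompleteSpace X]
    [NormedAddCommGroup Y] [NormedSpace ℝ Y]
    [NormedAddCommGroup Z] [NormedSpace ℝ Z]
    (B : X →L[ℝ] Y)                 -- the operator ∂ₜ − Pₜ
    (ev0 : X →L[ℝ] Z)               -- evaluation at the initial time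
    (πVX πWX : X →L[ℝ] X) (πVY πWY : Y →L[ℝ] Y)
    (C ε : ℝ) (hC : 0 < C) (hε : 0 ≤ ε)
    (hcomplX : ∀ h, πVX h + πWX h = h) (hidemX : ∀ h, πWX (πWX h) = πWX h)
    (hcomplY : ∀ ψ, πVY ψ + πWY ψ = ψ) (hidemY : ∀ ψ, πWY (πWY ψ) = πWY ψ)
    -- (1) continuity of ∂ₜ − Pₜ :
    (hB : ∀ h, ‖B h‖ ≤ C * ‖h‖)
    -- (2) unique solvability of the initial value problem, with estimate:
    (hsolve : ∀ ψ : Y, ∃! u : X, B u = ψ ∧ ev0 u = 0)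
    (hsolve_bound : ∀ (ψ : Y) (u : X), B u = ψ → ev0 u = 0 → ‖u‖ ≤ C * ‖ψ‖)
    -- (3) continuity of the projections:
    (hprojX : ∀ h, ‖πVX h‖ ≤ C * ‖h‖ ∧ ‖πWX h‖ ≤ C * ‖h‖)
    (hprojY : ∀ ψ, ‖πWY ψ‖ ≤ C * ‖ψ‖)
    (hev0 : ∀ h, ev0 h = 0 → ev0 (πWX h) = 0)
    -- (4) near-invariance of V under ∂ₜ − Pₜ :
    (heps : ∀ h, πWX h = 0 → ‖πWY (B h)‖ ≤ ε * ‖h‖)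
    -- ε sufficiently small relative to C :
    (hsmall : C ^ 2 * ε < 1) :
    ∀ ψ : Y, ∃ h : X, πWY (B h - ψ) = 0 ∧ ev0 h = 0 ∧ πVX h = 0 := by

  intro ψ
  classical
  have hq0 : (0:ℝ) ≤ C ^ 2 * ε := by positivity
  -- the solution operator from hypothesis (2)
  have hsolE : ∀ φ : Y, ∃ u : X, B u = φ ∧ ev0 u = 0 := fun φ => (hsolve φ).exists
  let sol : Y → X := fun φ => (hsolE φ).choose
  have hsol : ∀ φ, B (sol φ) = φ ∧ ev0 (sol φ) = 0 := fun φ => (hsolE φ).choose_spec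
  have hsolb : ∀ φ, ‖sol φ‖ ≤ C * ‖φ‖ := fun φ => hsolve_bound φ _ (hsol φ).1 (hsol φ).2
  -- basic projection identities
  have hVX : ∀ h, πVX h = h - πWX h := fun h => eq_sub_of_add_eq (hcomplX h)
  have hWV : ∀ h, πWX (πVX h) = 0 := by
    intro h
    rw [hVX, map_sub, hidemX, sub_self]
  have hVW : ∀ h, πVX (πWX h) = 0 := by
    intro h
    rw [hVX, hidemX, sub_self]
  -- the iteration step
  let step : X → X := fun h => πWX h + sol (πWY (B (πVX h)))
  -- step preserves the residual equation and the initial condition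
  have hres : ∀ h, πWY (B h - ψ) = 0 → πWY (B (step h) - ψ) = 0 := by
    intro h hh
    have : B (step h) - ψ = (B (πWX h) + πWY (B (πVX h))) - ψ := by
      simp only [step, map_add, (hsol _).1]
    rw [this]
    have hBsplit : B (πWX h) + B (πVX h) = B h := by
      rw [← map_add, add_comm, hcomplX]
    calc πWY (B (πWX h) + πWY (B (πVX h)) - ψ)
        = πWY (B (πWX h)) + πWY (πWY (B (πVX h))) - πWY ψ := by
          rw [map_sub, map_add]
      _ = πWY (B (πWX h) + B (πVX h) - ψ) := by rw [hidemY, map_sub, map_add]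
      _ = 0 := by rw [hBsplit, hh]
  have hinit : ∀ h, ev0 h = 0 → ev0 (step h) = 0 := by
    intro h hh
    simp only [step, map_add, hev0 h hh, (hsol _).2, add_zero]
  -- contraction of the V-component
  have hcontr : ∀ h, ‖πVX (step h)‖ ≤ (C ^ 2 * ε) * ‖πVX h‖ := by
    intro h
    have h1 : πVX (step h) = πVX (sol (πWY (B (πVX h)))) := by
      simp only [step, map_add, hVW, zero_add]
    rw [h1]
    have h2 : ‖πVX (sol (πWY (B (πVX h))))‖ ≤ C * ‖sol (πWY (B (πVX h)))‖ :=
      (hprojX _).1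
    have h3 : ‖sol (πWY (B (πVX h)))‖ ≤ C * ‖πWY (B (πVX h))‖ := hsolb _
    have h4 : ‖πWY (B (πVX h))‖ ≤ ε * ‖πVX h‖ := heps _ (hWV h)
    calc ‖πVX (sol (πWY (B (πVX h))))‖ ≤ C * ‖sol (πWY (B (πVX h)))‖ := h2
      _ ≤ C * (C * ‖πWY (B (πVX h))‖) := by
          exact mul_le_mul_of_nonneg_left h3 hC.le
      _ ≤ C * (C * (ε * ‖πVX h‖)) := by
          apply mul_le_mul_of_nonneg_left _ hC.le
          exact mul_le_mul_of_nonneg_left h4 hC.le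
      _ = (C ^ 2 * ε) * ‖πVX h‖ := by ring
  -- displacement bound
  have hdisp : ∀ h, ‖step h - h‖ ≤ (C * ε + 1) * ‖πVX h‖ := by
    intro h
    have h1 : step h - h = sol (πWY (B (πVX h))) - πVX h := by
      simp only [step, hVX]
      abel
    rw [h1]
    have h3 : ‖sol (πWY (B (πVX h)))‖ ≤ C * ‖πWY (B (πVX h))‖ := hsolb _
    have h4 : ‖πWY (B (πVX h))‖ ≤ ε * ‖πVX h‖ := heps _ (hWV h)
    have h5 : ‖sol (πWY (B (πVX h)))‖ ≤ (C * ε) * ‖πVX h‖ := by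
      calc ‖sol (πWY (B (πVX h)))‖ ≤ C * ‖πWY (B (πVX h))‖ := h3
        _ ≤ C * (ε * ‖πVX h‖) := mul_le_mul_of_nonneg_left h4 hC.le
        _ = (C * ε) * ‖πVX h‖ := by ring
    calc ‖sol (πWY (B (πVX h))) - πVX h‖
        ≤ ‖sol (πWY (B (πVX h)))‖ + ‖πVX h‖ := norm_sub_le _ _
      _ ≤ (C * ε) * ‖πVX h‖ + 1 * ‖πVX h‖ := by
          rw [one_mul]; exact add_le_add h5 le_rfl
      _ = (C * ε + 1) * ‖πVX h‖ := by ring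
  -- the iteration sequence
  set h0 : X := sol (πWY ψ) with hh0
  set f : ℕ → X := fun n => step^[n] h0 with hf
  have hfs : ∀ n, f (n + 1) = step (f n) := by
    intro n; simp only [hf, Function.iterate_succ_apply']
  have hgood : ∀ n, πWY (B (f n) - ψ) = 0 ∧ ev0 (f n) = 0 := by
    intro n
    induction n with
    | zero =>
      constructor
      · simp only [hf, Function.iterate_zero, id_eq, hh0, (hsol (πWY ψ)).1,
          map_sub, hidemY, sub_self]
      · simpa only [hf, Function.iterate_zero, id_eq] using (hsol (πWY ψ)).2
    | succ n ih =>
      rw [hfs]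
      exact ⟨hres _ ih.1, hinit _ ih.2⟩
  have hVbound : ∀ n, ‖πVX (f n)‖ ≤ (C ^ 2 * ε) ^ n * ‖πVX h0‖ := by
    intro n
    induction n with
    | zero => simp [hf]
    | succ n ih =>
      rw [hfs]
      calc ‖πVX (step (f n))‖ ≤ (C ^ 2 * ε) * ‖πVX (f n)‖ := hcontr _
        _ ≤ (C ^ 2 * ε) * ((C ^ 2 * ε) ^ n * ‖πVX h0‖) :=
            mul_le_mul_of_nonneg_left ih hq0
        _ = (C ^ 2 * ε) ^ (n + 1) * ‖πVX h0‖ := by ring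
  -- Cauchy
  have hcauchy : CauchySeq f := by
    apply cauchySeq_of_le_geometric (C ^ 2 * ε) ((C * ε + 1) * ‖πVX h0‖) hsmall
    intro n
    rw [dist_eq_norm, norm_sub_rev, hfs]
    calc ‖step (f n) - f n‖ ≤ (C * ε + 1) * ‖πVX (f n)‖ := hdisp _
      _ ≤ (C * ε + 1) * ((C ^ 2 * ε) ^ n * ‖πVX h0‖) := by
          apply mul_le_mul_of_nonneg_left (hVbound n)
          have : 0 ≤ C * ε := by positivity
          linarith
      _ = (C * ε + 1) * ‖πVX h0‖ * (C ^ 2 * ε) ^ n := by ring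
  obtain ⟨h, hlim⟩ := cauchySeq_tendsto_of_complete hcauchy
  refine ⟨h, ?_, ?_, ?_⟩
  · -- residual
    have h1 : Filter.Tendsto (fun n => πWY (B (f n) - ψ)) Filter.atTop
        (nhds (πWY (B h - ψ))) := by
      exact (πWY.continuous.comp ((B.continuous.sub continuous_const))).continuousAt.tendsto.comp hlim
    have h2 : (fun n => πWY (B (f n) - ψ)) = fun _ => (0 : Y) := by
      funext n; exact (hgood n).1
    rw [h2] at h1
    exact (tendsto_nhds_unique tendsto_const_nhds h1).symm
  · have h1 : Filter.Tendsto (fun n => ev0 (f n)) Filter.atTop (nhds (ev0 h)) :=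
      ev0.continuous.continuousAt.tendsto.comp hlim
    have h2 : (fun n => ev0 (f n)) = fun _ => (0 : Z) := by
      funext n; exact (hgood n).2
    rw [h2] at h1
    exact (tendsto_nhds_unique tendsto_const_nhds h1).symm
  · have h1 : Filter.Tendsto (fun n => πVX (f n)) Filter.atTop (nhds (πVX h)) :=
      πVX.continuous.continuousAt.tendsto.comp hlim
    have h2 : Filter.Tendsto (fun n => πVX (f n)) Filter.atTop (nhds 0) := by
      rw [tendsto_zero_iff_norm_tendsto_zero]
      apply squeeze_zero (fun n => norm_nonneg _) hVbound
      have : Filter.Tendsto (fun n : ℕ => (C ^ 2 * ε) ^ n) Filter.atTop (nhds 0) :=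
        tendsto_pow_atTop_nhds_zero_of_lt_one hq0 hsmall
      simpa using this.mul_const ‖πVX h0‖
    exact tendsto_nhds_unique h1 h2
end
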